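/- Let G be a finite nonempty threshold graph. Then χ(G) = Ψ(G), i.e., the chromatic number of G equals its achromatic number. (This is the achromatic-number part of the theorem asserting χ(G) = Σ(G) = Ψ(G) for threshold graphs.) -/

import Mathlib

/-- The graph `2K₂`: two disjoint edges, on four vertices. -/
def twoK2 : SimpleGraph (Fin 4) := SimpleGraph.fromEdgeSet {s(0, 1), s(2, 3)}

/-- A threshold graph: a simple graph with no induced subgraph isomorphic to `2K₂`, `C₄`
or `P₄`. -/
def SimpleGraph.IsThreshold {α : Type*} (G : SimpleGraph α) : Prop :=
  IsEmpty (twoK2 ↪g G) ∧ IsEmpty (SimpleGraph.cycleGraph 4 ↪g G) ∧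
    IsEmpty (SimpleGraph.pathGraph 4 ↪g G)

/-- The achromatic number of `G`: the largest `n` such that there is a graph homomorphism
from `G` onto the complete graph `K_n` which is surjective on edges (equivalently, a proper
colouring with `n` colours such that every pair of distinct colours appears on an edge). -/
noncomputable def SimpleGraph.achromaticNumber {α : Type*} (G : SimpleGraph α) : ℕ :=
  sSup {n : ℕ | ∃ φ : G →g completeGraph (Fin n), Function.Surjective φ ∧
    ∀ a b : Fin n, a ≠ b → ∃ u v, G.Adj u v ∧ φ u = a ∧ φ v = b}

/-!
In a threshold graph the vicinal preorder `u ≤ v ↔ N(u) \ {v} ⊆ N(v)` is total: two incomparable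
vertices, together with witnesses of their incomparability, span an induced `2K₂`, `C₄` or `P₄`.
Given a complete colouring, pick a vicinal maximum in each colour class. For two colours joined
by an edge `u w`, the maximum `m` of the class of `u` is adjacent to `w`, hence the maximum of the
class of `w` is adjacent to `m`; so the maxima form a clique and `Ψ ≤ χ`. Conversely every
colouring with `χ` colours is complete, since two colours not joined by an edge could be merged.
-/

namespace SimpleGraph

variable {α : Type*} {G : SimpleGraph α}

def VicinalLE (G : SimpleGraph α) (u v : α) : Prop :=
  G.neighborSet u \ {v} ⊆ G.neighborSet v

instance : IsTrans α G.VicinalLE where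
  trans u v w huv hvw := by
    rintro x ⟨hux, hxw⟩
    by_cases hxv : x = v
    · subst hxv
      by_cases huw : u = w
      · exact huw ▸ hux
      · exact (huv ⟨(hvw ⟨hux.symm, huw⟩ : G.Adj w u).symm, Ne.symm hxw⟩).symm
    · exact hvw ⟨huv ⟨hux, hxv⟩, hxw⟩

theorem IsThreshold.total_vicinalLE (hG : G.IsThreshold) : Std.Total G.VicinalLE := by
  refine ⟨fun u v => ?_⟩
  obtain ⟨h2K2, hC4, hP4⟩ := hG
  by_contra! h
  simp only [VicinalLE, Set.not_subset, Set.mem_sdiff, mem_neighborSet,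
    Set.mem_singleton_iff] at h
  obtain ⟨⟨x, ⟨hux, hxv⟩, hvx⟩, ⟨y, ⟨hvy, hyu⟩, huy⟩⟩ := h
  have hux' := hux.ne
  have hvy' := hvy.ne
  have hxy : x ≠ y := by rintro rfl; exact hvx hvy
  have huv : u ≠ v := by rintro rfl; exact hvx hux
  have emb : ∀ {H : SimpleGraph (Fin 4)} (w : Fin 4 → α), Function.Injective w →
      (∀ i j, G.Adj (w i) (w j) ↔ H.Adj i j) → Nonempty (H ↪g G) :=
    fun w hw h => ⟨⟨⟨w, hw⟩, h _ _⟩⟩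
  by_cases huv' : G.Adj u v <;> by_cases hxy' : G.Adj x y
  · refine hC4.false (emb ![u, x, y, v] ?_ ?_).some
    · intro i j h; fin_cases i <;> fin_cases j <;> simp_all [eq_comm]
    · intro i j; fin_cases i <;> fin_cases j <;> simp [cycleGraph_adj, G.adj_comm, *] <;> decide
  · refine hP4.false (emb ![x, u, v, y] ?_ ?_).some
    · intro i j h; fin_cases i <;> fin_cases j <;> simp_all [eq_comm]
    · intro i j; fin_cases i <;> fin_cases j <;> simp [pathGraph_adj, G.adj_comm, *]
  · refine hP4.false (emb ![u, x, y, v] ?_ ?_).some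
    · intro i j h; fin_cases i <;> fin_cases j <;> simp_all [eq_comm]
    · intro i j; fin_cases i <;> fin_cases j <;> simp [pathGraph_adj, G.adj_comm, *]
  · refine h2K2.false (emb ![u, x, v, y] ?_ ?_).some
    · intro i j h; fin_cases i <;> fin_cases j <;> simp_all [eq_comm]
    · intro i j; fin_cases i <;> fin_cases j <;> simp [twoK2, G.adj_comm, *]

theorem exists_forall_vicinalLE [Finite α] [Std.Total G.VicinalLE] {s : Set α}
    (hs : s.Nonempty) : ∃ m ∈ s, ∀ x ∈ s, G.VicinalLE x m := by
  have := hs.to_subtype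
  obtain ⟨m, hm⟩ := (Std.Total.directed (r := G.VicinalLE) (Subtype.val : s → α)).finite_le id
  exact ⟨m, m.2, fun x hx => hm ⟨x, hx⟩⟩

namespace Coloring

variable {β : Type*}

def IsComplete (C : G.Coloring β) : Prop :=
  Function.Surjective C ∧ ∀ a b, a ≠ b → ∃ u v, G.Adj u v ∧ C u = a ∧ C v = b

theorem IsComplete.card_le_chromaticNumber [Finite α] [Std.Total G.VicinalLE]
    {C : G.Coloring β} (hC : C.IsComplete) : Nat.card β ≤ G.chromaticNumber := by
  choose f hfC hf using fun c => exists_forall_vicinalLE (G := G) (s := {x | C x = c}) (hC.1 c)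
  refine le_chromaticNumber_of_pairwise_adj le_rfl f fun a b hab => ?_
  obtain ⟨u, w, huw, rfl, rfl⟩ := hC.2 a b hab
  have hfw : G.Adj (f (C u)) w := hf _ u rfl ⟨huw, fun h => hab (by
    rw [Set.mem_singleton_iff.1 h, hfC])⟩
  exact (hf _ w rfl ⟨hfw.symm, fun h => hab (by
    rw [← hfC (C u), Set.mem_singleton_iff.1 h, hfC])⟩).symm

theorem isComplete_of_chromaticNumber_eq {n : ℕ} (hn : G.chromaticNumber = n)
    (C : G.Coloring (Fin n)) : C.IsComplete := by
  have hsurj := (chromaticNumber_eq_iff_forall_surjective ⟨C⟩).1 hn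
  refine ⟨hsurj C, fun a b hab => ?_⟩
  by_contra! hab'
  let D : G.Coloring (Fin n) := Coloring.mk (fun v => if C v = b then a else C v) fun {u v} huv => by
    have := C.valid huv
    split_ifs with hu hv hv
    · exact absurd (hu.trans hv.symm) this
    · exact fun h => hab' v u huv.symm h.symm hu
    · exact fun h => hab' u v huv h hv
    · exact this
  obtain ⟨v, hv⟩ := hsurj D b
  change (if C v = b then a else C v) = b at hv
  split_ifs at hv with h
  exacts [hab hv, h hv]

end Coloring

theorem exists_chromaticNumber_eq [Finite α] : ∃ n : ℕ, G.chromaticNumber = n :=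
  (ENat.ne_top_iff_exists.1 <| chromaticNumber_ne_top_iff_exists.2
    ⟨_, G.colorable_chromaticNumber_of_fintype⟩).imp fun _ => Eq.symm

theorem achromaticNumber_eq_sSup :
    G.achromaticNumber = sSup {n | ∃ C : G.Coloring (Fin n), C.IsComplete} := rfl

theorem chromaticNumber_le_achromaticNumber [Finite α] :
    G.chromaticNumber ≤ G.achromaticNumber := by
  obtain ⟨n, hn⟩ := G.exists_chromaticNumber_eq
  obtain ⟨C⟩ := chromaticNumber_le_iff_colorable.1 hn.le
  have hbdd : BddAbove {n | ∃ C : G.Coloring (Fin n), C.IsComplete} :=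
    ⟨Nat.card α, fun m ⟨C, hC⟩ => by simpa using Nat.card_le_card_of_surjective _ hC.1⟩
  rw [hn, achromaticNumber_eq_sSup, Nat.cast_le]
  exact le_csSup hbdd ⟨C, C.isComplete_of_chromaticNumber_eq hn⟩

theorem achromaticNumber_le_chromaticNumber [Finite α] [Std.Total G.VicinalLE] :
    G.achromaticNumber ≤ G.chromaticNumber := by
  obtain ⟨n, hn⟩ := G.exists_chromaticNumber_eq
  rw [hn, achromaticNumber_eq_sSup, Nat.cast_le]
  refine csSup_le' fun m ⟨C, hC⟩ => ?_
  simpa [hn] using hC.card_le_chromaticNumber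

end SimpleGraph

theorem threshold_chromatic_eq_achromatic_general {α : Type*} [Fintype α]
    (G : SimpleGraph α) (hG : G.IsThreshold) :
    G.chromaticNumber = (G.achromaticNumber : ℕ∞) := by
  have := hG.total_vicinalLE
  exact G.chromaticNumber_le_achromaticNumber.antisymm G.achromaticNumber_le_chromaticNumber

/-- For a finite nonempty threshold graph `G`, the chromatic number equals the achromatic
number. -/
theorem threshold_chromatic_eq_achromatic {α : Type*} [Fintype α] [Nonempty α]
    (G : SimpleGraph α) (hG : G.IsThreshold) :
    G.chromaticNumber = (G.achromaticNumber : ℕ∞) :=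
  threshold_chromatic_eq_achromatic_general G hG
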